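/- Let V be a real inner product space, r ≥ 2 and α > 0 real numbers. There exists a constant C > 0 depending only on r and α such that for all δ ≥ 0, all h > 0, all μ̄ > 0 and all x, y, v ∈ V, defining S(x, v) = μ̄ (δ^α + h^{−α}‖x‖^α)^{(r−2)/α} ⟨x, v⟩, one has |S(x, v) − S(y, v)| ≤ C μ̄ (δ^r + h^{−r}‖x‖^r + h^{−r}‖y‖^r)^{(r−2)/r} ‖x − y‖ ‖v‖. -/

import Mathlib

open scoped RealInnerProductSpace
open Real

/-!
Rescaling by `h` reduces the claim to `h = 1`, where `S(x, v) - S(y, v) = μ̄ ⟪F x - F y, v⟫` for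
the map `F x = (δ^α + ‖x‖^α)^p • x` with `p = (r - 2)/α`. Writing
`F x - F y = φ(‖x‖) • (x - y) + (φ(‖x‖) - φ(‖y‖)) • y` with `φ t = (δ^α + t^α)^p`, both terms are
controlled by `φ(max ‖x‖ ‖y‖) ‖x - y‖`: the second one through the elementary bound
`A^p - B^p ≤ max p 1 · A^(p-1) (A - B)`, applied once with exponent `p` and once with `α`.
Finally `φ(max ‖x‖ ‖y‖) ≤ 2^p (δ^r + ‖x‖^r + ‖y‖^r)^((r-2)/r)`, since both sides are comparable
to `max δ ‖x‖ ‖y‖ ^ (r - 2)`.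
-/

lemma rpow_sub_rpow_le_max_mul {p A B : ℝ} (hp : 0 ≤ p) (hA : 0 < A) (hB : 0 ≤ B) (hBA : B ≤ A) :
    A ^ p - B ^ p ≤ max p 1 * A ^ (p - 1) * (A - B) := by
  have hAp : A ^ (p - 1) * A = A ^ p := by rw [← rpow_add_one hA.ne']; ring_nf
  rcases le_or_gt 1 p with hp1 | hp1
  · -- Bernoulli's inequality for `B / A = 1 + (B / A - 1)`, i.e. convexity of `t ↦ t ^ p`
    have hbern := one_add_mul_self_le_rpow_one_add (s := B / A - 1)
      (by linarith [div_nonneg hB hA.le]) hp1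
    rw [add_sub_cancel, div_rpow hB hA.le, le_div_iff₀ (rpow_pos_of_pos hA p)] at hbern
    have hAB : A ^ p * (B / A) = A ^ (p - 1) * B := by rw [rpow_sub_one hA.ne']; ring
    have hnonneg : 0 ≤ A ^ (p - 1) * (A - B) := mul_nonneg (rpow_nonneg hA.le _) (by linarith)
    nlinarith [le_max_left p 1]
  · have hB_le : A ^ (p - 1) * B ≤ B ^ p := by
      rcases hB.eq_or_lt with rfl | hB0
      · simpa using rpow_nonneg le_rfl p
      calc A ^ (p - 1) * B ≤ B ^ (p - 1) * B :=
            mul_le_mul_of_nonneg_right (rpow_le_rpow_of_nonpos hB0 hBA (by linarith)) hB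
        _ = B ^ p := by rw [← rpow_add_one hB0.ne']; ring_nf
    rw [max_eq_right hp1.le]
    nlinarith

lemma rpow_add_rpow_sub_mul_le {δ α p a b : ℝ} (hδ : 0 ≤ δ) (hα : 0 < α) (hp : 0 ≤ p)
    (hb : 0 ≤ b) (hba : b ≤ a) :
    ((δ ^ α + a ^ α) ^ p - (δ ^ α + b ^ α) ^ p) * b ≤
      max p 1 * max α 1 * (δ ^ α + a ^ α) ^ p * (a - b) := by
  rcases (hb.trans hba).eq_or_lt with rfl | ha
  · obtain rfl : b = 0 := le_antisymm hba hb
    simp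
  set A := δ ^ α + a ^ α
  have hA : 0 < A := add_pos_of_nonneg_of_pos (rpow_nonneg hδ α) (rpow_pos_of_pos ha α)
  have hpow : A ^ p - (δ ^ α + b ^ α) ^ p ≤ max p 1 * A ^ (p - 1) * (a ^ α - b ^ α) := by
    convert rpow_sub_rpow_le_max_mul (B := δ ^ α + b ^ α) hp hA (by positivity)
      (add_le_add_right (rpow_le_rpow hb hba hα.le) _) using 2
    ring
  have hbase : (a ^ α - b ^ α) * b ≤ max α 1 * a ^ α * (a - b) := by
    have h := rpow_sub_rpow_le_max_mul hα.le ha hb hba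
    have hb_le : a ^ (α - 1) * b ≤ a ^ α := by
      calc a ^ (α - 1) * b ≤ a ^ (α - 1) * a := by gcongr
        _ = a ^ α := by rw [← rpow_add_one ha.ne']; ring_nf
    have hab : 0 ≤ max α 1 * (a - b) := mul_nonneg (by positivity) (by linarith)
    nlinarith [rpow_nonneg ha.le α]
  have hA_le : A ^ (p - 1) * a ^ α ≤ A ^ p := by
    calc A ^ (p - 1) * a ^ α ≤ A ^ (p - 1) * A := by
          gcongr; exact le_add_of_nonneg_left (rpow_nonneg hδ α)
      _ = A ^ p := by rw [← rpow_add_one hA.ne']; ring_nf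
  calc (A ^ p - (δ ^ α + b ^ α) ^ p) * b
      ≤ max p 1 * A ^ (p - 1) * ((a ^ α - b ^ α) * b) := by
        rw [← mul_assoc]; exact mul_le_mul_of_nonneg_right hpow hb
    _ ≤ max p 1 * A ^ (p - 1) * (max α 1 * a ^ α * (a - b)) := by gcongr
    _ = max p 1 * max α 1 * (a - b) * (A ^ (p - 1) * a ^ α) := by ring
    _ ≤ max p 1 * max α 1 * (a - b) * A ^ p := by gcongr
    _ = max p 1 * max α 1 * A ^ p * (a - b) := by ring

lemma norm_rpow_add_rpow_smul_sub_le {E : Type*} [SeminormedAddCommGroup E] [NormedSpace ℝ E]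
    {δ α p : ℝ} (hδ : 0 ≤ δ) (hα : 0 < α) (hp : 0 ≤ p) (x y : E) :
    ‖(δ ^ α + ‖x‖ ^ α) ^ p • x - (δ ^ α + ‖y‖ ^ α) ^ p • y‖ ≤
      (1 + max p 1 * max α 1) * (δ ^ α + max ‖x‖ ‖y‖ ^ α) ^ p * ‖x - y‖ := by
  wlog hyx : ‖y‖ ≤ ‖x‖ generalizing x y
  · simpa only [norm_sub_rev, max_comm] using this y x (le_of_not_ge hyx)
  rw [max_eq_left hyx]
  set φx := (δ ^ α + ‖x‖ ^ α) ^ p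
  set φy := (δ ^ α + ‖y‖ ^ α) ^ p
  have hφx : 0 ≤ φx := by positivity
  have hφ : φy ≤ φx :=
    rpow_le_rpow (by positivity) (add_le_add_right (rpow_le_rpow (norm_nonneg y) hyx hα.le) _) hp
  have hsplit : φx • x - φy • y = φx • (x - y) + (φx - φy) • y := by
    rw [smul_sub, sub_smul]; abel
  have hdiff := rpow_add_rpow_sub_mul_le hδ hα hp (norm_nonneg y) hyx
  have hxy := norm_sub_norm_le x y
  calc ‖φx • x - φy • y‖ ≤ φx * ‖x - y‖ + (φx - φy) * ‖y‖ := by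
        rw [hsplit]
        refine (norm_add_le _ _).trans_eq ?_
        rw [norm_smul, norm_smul, Real.norm_of_nonneg hφx, Real.norm_of_nonneg (by linarith)]
    _ ≤ φx * ‖x - y‖ + max p 1 * max α 1 * φx * ‖x - y‖ :=
        add_le_add_right (hdiff.trans (mul_le_mul_of_nonneg_left hxy (by positivity))) _
    _ = (1 + max p 1 * max α 1) * φx * ‖x - y‖ := by ring

lemma rpow_add_max_rpow_rpow_le {δ α r q a b : ℝ} (hδ : 0 ≤ δ) (hα : 0 < α) (hr : 0 < r)
    (hq : 0 ≤ q) (ha : 0 ≤ a) (hb : 0 ≤ b) :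
    (δ ^ α + max a b ^ α) ^ (q / α) ≤ 2 ^ (q / α) * (δ ^ r + a ^ r + b ^ r) ^ (q / r) := by
  set M := max δ (max a b)
  have hM : 0 ≤ M := hδ.trans (le_max_left _ _)
  have hαM : δ ^ α + max a b ^ α ≤ 2 * M ^ α := by
    have h1 : δ ^ α ≤ M ^ α := by gcongr; exact le_max_left _ _
    have h2 : max a b ^ α ≤ M ^ α := by gcongr; exact le_max_right _ _
    linarith
  have hrM : M ^ r ≤ δ ^ r + a ^ r + b ^ r := by
    have := rpow_nonneg hδ r
    have := rpow_nonneg ha r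
    have := rpow_nonneg hb r
    rcases max_choice δ (max a b) with h | h <;> simp only [M, h]
    · linarith
    · rcases max_choice a b with h' | h' <;> rw [h'] <;> linarith
  calc (δ ^ α + max a b ^ α) ^ (q / α) ≤ (2 * M ^ α) ^ (q / α) := by gcongr
    _ = 2 ^ (q / α) * (M ^ r) ^ (q / r) := by
        rw [mul_rpow zero_le_two (by positivity), ← rpow_mul hM, ← rpow_mul hM,
          mul_div_cancel₀ _ hα.ne', mul_div_cancel₀ _ hr.ne']
    _ ≤ 2 ^ (q / α) * (δ ^ r + a ^ r + b ^ r) ^ (q / r) := by gcongr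

lemma rpow_neg_mul_norm_rpow {V : Type*} [SeminormedAddCommGroup V] [NormedSpace ℝ V]
    {h : ℝ} (hh : 0 < h) (s : ℝ) (w : V) : h ^ (-s) * ‖w‖ ^ s = ‖h⁻¹ • w‖ ^ s := by
  rw [norm_smul, Real.norm_of_nonneg (inv_nonneg.2 hh.le), mul_rpow (by positivity) (norm_nonneg w),
    inv_rpow hh.le, rpow_neg hh.le]

theorem stabilization_holder_continuity
    {V : Type*} [NormedAddCommGroup V] [InnerProductSpace ℝ V]
    (r α : ℝ) (hr : 2 ≤ r) (hα : 0 < α) :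
    ∃ C : ℝ, 0 < C ∧
      ∀ (δ h μ : ℝ), 0 ≤ δ → 0 < h → 0 < μ →
        ∀ x y v : V,
          |μ * (δ ^ α + h ^ (-α) * ‖x‖ ^ α) ^ ((r - 2) / α) * ⟪x, v⟫ -
              μ * (δ ^ α + h ^ (-α) * ‖y‖ ^ α) ^ ((r - 2) / α) * ⟪y, v⟫| ≤
            C * μ * (δ ^ r + h ^ (-r) * ‖x‖ ^ r + h ^ (-r) * ‖y‖ ^ r) ^ ((r - 2) / r) *
              ‖x - y‖ * ‖v‖ := by
  have hp : 0 ≤ (r - 2) / α := div_nonneg (by linarith) hα.le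
  set K := 1 + max ((r - 2) / α) 1 * max α 1
  refine ⟨2 ^ ((r - 2) / α) * K, by positivity, fun δ h μ hδ hh hμ x y v => ?_⟩
  simp only [rpow_neg_mul_norm_rpow hh]
  set x' := h⁻¹ • x
  set y' := h⁻¹ • y
  set D := (δ ^ α + ‖x'‖ ^ α) ^ ((r - 2) / α) • x' - (δ ^ α + ‖y'‖ ^ α) ^ ((r - 2) / α) • y'
  have hrescale : μ * (δ ^ α + ‖x'‖ ^ α) ^ ((r - 2) / α) * ⟪x, v⟫ -
      μ * (δ ^ α + ‖y'‖ ^ α) ^ ((r - 2) / α) * ⟪y, v⟫ = μ * h * ⟪D, v⟫ := by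
    simp only [D, x', y', inner_sub_left, real_inner_smul_left]
    field_simp
  have hxy : h * ‖x' - y'‖ = ‖x - y‖ := by
    rw [← smul_sub, norm_smul, Real.norm_of_nonneg (inv_nonneg.2 hh.le), mul_inv_cancel_left₀ hh.ne']
  have hD := norm_rpow_add_rpow_smul_sub_le hδ hα hp x' y'
  have hmax := rpow_add_max_rpow_rpow_le (r := r) (q := r - 2) hδ hα (by linarith) (by linarith)
    (norm_nonneg x') (norm_nonneg y')
  rw [hrescale, ← hxy]
  calc |μ * h * ⟪D, v⟫| ≤ μ * h * (‖D‖ * ‖v‖) := by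
        rw [abs_mul, abs_of_pos (by positivity)]
        gcongr
        exact abs_real_inner_le_norm D v
    _ ≤ μ * h * (K * (2 ^ ((r - 2) / α) * (δ ^ r + ‖x'‖ ^ r + ‖y'‖ ^ r) ^ ((r - 2) / r)) *
          ‖x' - y'‖ * ‖v‖) := by
        gcongr
        exact hD.trans (by gcongr)
    _ = _ := by ring
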